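/- arXiv:2004.05053 — 4 statements merged into one kernel-verified Lean document; each statement's English description precedes it below -/
import Mathlib

section
/- Let f, h : ℝⁿ → ℝ be smooth (n ≥ 2), f positive, m ≥ 1, ρ ∈ ℝ. Suppose for all i ≠ j: f·∂²h/∂xᵢ∂xⱼ − m·∂²f/∂xᵢ∂xⱼ = 0, and for all i: f·∂²h/∂xᵢ² − m·∂²f/∂xᵢ² = ρ·f. Then for all i ≠ j: (∂f/∂xⱼ)·(∂²h/∂xᵢ²) − (∂f/∂xᵢ)·(∂²h/∂xᵢ∂xⱼ) = ρ·(∂f/∂xⱼ). -/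
noncomputable def pd {n : ℕ} (i : Fin n) (f : (Fin n → ℝ) → ℝ) : (Fin n → ℝ) → ℝ :=
  fun x => fderiv ℝ f x (Pi.single i 1)

lemma pd_smooth {n : ℕ} (i : Fin n) {g : (Fin n → ℝ) → ℝ} (hg : ContDiff ℝ (⊤ : ℕ∞) g) :
    ContDiff ℝ (⊤ : ℕ∞) (pd i g) :=
  (hg.fderiv_right (by simp)).clm_apply contDiff_const

lemma pd_eq_snd {n : ℕ} (i j : Fin n) {g : (Fin n → ℝ) → ℝ} (hg : ContDiff ℝ (⊤ : ℕ∞) g)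
    (x : Fin n → ℝ) :
    pd i (pd j g) x = fderiv ℝ (fderiv ℝ g) x (Pi.single i 1) (Pi.single j 1) := by
  unfold pd
  rw [fderiv_clm_apply (((hg.fderiv_right (m := 1) (by exact WithTop.coe_le_coe.mpr le_top)).differentiable one_ne_zero) x)
    (differentiableAt_const _)]
  simp

lemma pd_comm {n : ℕ} (i j : Fin n) {g : (Fin n → ℝ) → ℝ} (hg : ContDiff ℝ (⊤ : ℕ∞) g)
    (x : Fin n → ℝ) : pd i (pd j g) x = pd j (pd i g) x := by
  rw [pd_eq_snd i j hg, pd_eq_snd j i hg]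
  exact second_derivative_symmetric (fun y => (hg.differentiable (by simp) y).hasFDerivAt)
    (((hg.fderiv_right (m := 1) (by exact WithTop.coe_le_coe.mpr le_top)).differentiable one_ne_zero x).hasFDerivAt) _ _

lemma pd_mul {n : ℕ} (i : Fin n) {a b : (Fin n → ℝ) → ℝ} {x : Fin n → ℝ}
    (ha : DifferentiableAt ℝ a x) (hb : DifferentiableAt ℝ b x) :
    pd i (fun y => a y * b y) x = pd i a x * b x + a x * pd i b x := by
  unfold pd
  rw [fderiv_fun_mul ha hb]
  simp
  ring

lemma pd_sub {n : ℕ} (i : Fin n) {a b : (Fin n → ℝ) → ℝ} {x : Fin n → ℝ}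
    (ha : DifferentiableAt ℝ a x) (hb : DifferentiableAt ℝ b x) :
    pd i (fun y => a y - b y) x = pd i a x - pd i b x := by
  unfold pd
  rw [fderiv_fun_sub ha hb]
  simp

lemma pd_const_mul {n : ℕ} (i : Fin n) (c : ℝ) {a : (Fin n → ℝ) → ℝ} {x : Fin n → ℝ}
    (ha : DifferentiableAt ℝ a x) :
    pd i (fun y => c * a y) x = c * pd i a x := by
  unfold pd
  rw [fderiv_const_mul ha]
  simp

theorem stmt0 {n m : ℕ} (hn : 2 ≤ n) (hm : 1 ≤ m) (ρ : ℝ)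
    (f h : (Fin n → ℝ) → ℝ) (hf : ContDiff ℝ (⊤ : ℕ∞) f) (hh : ContDiff ℝ (⊤ : ℕ∞) h)
    (hfpos : ∀ x, 0 < f x)
    (heq1 : ∀ i j : Fin n, i ≠ j → ∀ x,
      f x * pd j (pd i h) x - (m : ℝ) * pd j (pd i f) x = 0)
    (heq2 : ∀ i : Fin n, ∀ x,
      f x * pd i (pd i h) x - (m : ℝ) * pd i (pd i f) x = ρ * f x) :
    ∀ i j : Fin n, i ≠ j → ∀ x,
      pd j f x * pd i (pd i h) x - pd i f x * pd j (pd i h) x = ρ * pd j f x := by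
  intro i j hij x
  -- smoothness facts
  have hhi := pd_smooth i hh
  have hhii := pd_smooth i hhi
  have hhij := pd_smooth j hhi
  have hfi := pd_smooth i hf
  have hfii := pd_smooth i hfi
  have hfij := pd_smooth j hfi
  have df : DifferentiableAt ℝ f x := (hf.differentiable (by simp)) x
  have dhii : DifferentiableAt ℝ (pd i (pd i h)) x := (hhii.differentiable (by simp)) x
  have dfii : DifferentiableAt ℝ (pd i (pd i f)) x := (hfii.differentiable (by simp)) x
  have dhij : DifferentiableAt ℝ (pd j (pd i h)) x := (hhij.differentiable (by simp)) x
  have dfij : DifferentiableAt ℝ (pd j (pd i f)) x := (hfij.differentiable (by simp)) x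
  -- differentiate heq2 in direction j
  have hF : (fun y => (f y * pd i (pd i h) y - (m : ℝ) * pd i (pd i f) y) - ρ * f y)
      = fun _ => (0 : ℝ) := funext fun y => by linarith [heq2 i y]
  have key1 : (pd j f x * pd i (pd i h) x + f x * pd j (pd i (pd i h)) x
      - (m : ℝ) * pd j (pd i (pd i f)) x) - ρ * pd j f x = 0 := by
    have h0 : pd j (fun y => (f y * pd i (pd i h) y - (m : ℝ) * pd i (pd i f) y) - ρ * f y) x
        = 0 := by rw [hF]; simp [pd]
    rw [pd_sub j ((df.fun_mul dhii).fun_sub (dfii.const_mul _)) (df.const_mul _),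
      pd_sub j (df.fun_mul dhii) (dfii.const_mul _), pd_mul j df dhii,
      pd_const_mul j _ dfii, pd_const_mul j _ df] at h0
    linarith
  -- differentiate heq1 in direction i
  have hG : (fun y => f y * pd j (pd i h) y - (m : ℝ) * pd j (pd i f) y)
      = fun _ => (0 : ℝ) := funext fun y => heq1 i j hij y
  have key2 : pd i f x * pd j (pd i h) x + f x * pd i (pd j (pd i h)) x
      - (m : ℝ) * pd i (pd j (pd i f)) x = 0 := by
    have h0 : pd i (fun y => f y * pd j (pd i h) y - (m : ℝ) * pd j (pd i f) y) x = 0 := by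
      rw [hG]; simp [pd]
    rw [pd_sub i (df.fun_mul dhij) (dfij.const_mul _), pd_mul i df dhij,
      pd_const_mul i _ dfij] at h0
    linarith
  rw [pd_comm i j hhi, pd_comm i j hfi] at key2
  linarith
end

section
/- Let f : ℝⁿ → ℝ be smooth with all first partial derivatives nonvanishing. Suppose for each i ≠ j there is a function F_i, not depending on the variable xᵢ, with ∂f/∂xᵢ = e^{F_i}·∂f/∂xⱼ, and symmetrically ∂f/∂xⱼ = e^{F_j}·∂f/∂xᵢ with F_j not depending on xⱼ. Then F_i = −F_j, and each F_i is a constant function. -/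
theorem stmt3 {n : ℕ} (hn : 3 ≤ n)
    (f : (Fin n → ℝ) → ℝ) (hf : ContDiff ℝ (⊤ : ℕ∞) f)
    (hfd : ∀ i : Fin n, ∀ x, pd i f x ≠ 0)
    (F : Fin n → (Fin n → ℝ) → ℝ)
    (hFind : ∀ i : Fin n, ∀ x y : Fin n → ℝ, (∀ k, k ≠ i → x k = y k) → F i x = F i y)
    (hFeq : ∀ i j : Fin n, i ≠ j → ∀ x,
      pd i f x = Real.exp (F i x) * pd j f x) :
    (∀ i j : Fin n, i ≠ j → ∀ x, F i x = - F j x) ∧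
    (∀ i : Fin n, ∃ c : ℝ, ∀ x, F i x = c) := by
  have hneg : ∀ i j : Fin n, i ≠ j → ∀ x, F i x = - F j x := by
    intro i j hij x
    have h1 := hFeq i j hij x
    have h2 := hFeq j i hij.symm x
    have hd := hfd i x
    rw [h2] at h1
    have hmul : Real.exp (F i x) * Real.exp (F j x) = 1 := by
      have : (Real.exp (F i x) * Real.exp (F j x) - 1) * pd i f x = 0 := by ring_nf; nlinarith [h1]
      rcases mul_eq_zero.mp this with h | h
      · linarith
      · exact absurd h hd
    rw [← Real.exp_add] at hmul
    have : F i x + F j x = (0:ℝ) := Real.exp_eq_exp.mp (by rw [hmul, Real.exp_zero])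
    linarith
  refine ⟨hneg, ?_⟩
  intro i
  have key : ∀ m : Fin n, ∀ x y : Fin n → ℝ, (∀ k, k ≠ m → x k = y k) → F i x = F i y := by
    intro m x y h
    by_cases him : m = i
    · exact hFind i x y (him ▸ h)
    · have him' : i ≠ m := fun e => him e.symm
      rw [hneg i m him' x, hneg i m him' y, hFind m x y h]
  have main : ∀ s : Finset (Fin n), ∀ x y : Fin n → ℝ, (∀ k, k ∉ s → x k = y k) → F i x = F i y := by
    intro s
    induction s using Finset.induction_on with
    | empty =>
      intro x y h
      congr 1
      funext k
      exact h k (Finset.notMem_empty k)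
    | @insert a s ha ih =>
      intro x y h
      set z := Function.update x a (y a) with hz
      have hxz : F i x = F i z := by
        apply key a
        intro k hk
        simp [hz, Function.update_of_ne hk]
      have hzy : F i z = F i y := by
        apply ih
        intro k hk
        by_cases hka : k = a
        · subst hka; simp [hz]
        · rw [hz, Function.update_of_ne hka]
          exact h k (by simp [hka, hk])
      rw [hxz, hzy]
  exact ⟨F i (fun _ => 0), fun x => main Finset.univ x (fun _ => 0) (fun k hk => absurd (Finset.mem_univ k) hk)⟩
end

section
/- Fix n ≥ 2, m ≥ 1, a > 0, a₁, a₂ ∈ ℝ with a₁² + a₂² ≠ 0, b ∈ ℝ, and c₁,…,cₙ ∈ ℝ with Σ cₖ = 0. Define ξ(x) = Σₖ xₖ, f(x) = a₁·e^{√(a/m)·ξ} + a₂·e^{−√(a/m)·ξ}, and h(x) = −((n−1)a/2)·Σₖ xₖ² + a·Σ_{k<l} xₖxₗ + Σₖ cₖxₖ + b. Then with ρ = −na and λ_F = 4a₁a₂ρ(m−1)/m, the functions f and h satisfy: (i) f·∂²h/∂xᵢ∂xⱼ = m·∂²f/∂xᵢ∂xⱼ for all i ≠ j; (ii) f·∂²h/∂xᵢ²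 − m·∂²f/∂xᵢ² = ρ·f for all i; (iii) Σₖ [−f·∂²f/∂xₖ² − (m−1)(∂f/∂xₖ)² + f·(∂f/∂xₖ)·(∂h/∂xₖ)] = ρf² − λ_F. -/
/-!
Write `ξ x = ∑ k, x k`. The function `f` is `F ∘ ξ` with `F t = a₁ e^{st} + a₂ e^{-st}`,
`s² = a / m`, so every second partial derivative of `f` equals `F'' ∘ ξ = (a / m) f`.
After `∑_{k<l} x_k x_l = (ξ² - ∑ x_k²) / 2`, `h` is a quadratic polynomial whose Hessian is
`a - n a δᵢⱼ` and whose gradient components sum to `∑ c_k = 0`; this gives (i) and (ii).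
In (iii) the gradient of `h` then drops out, and what remains is `F'² = s² (F² - 4 a₁ a₂)`.
-/

open Real

section Calculus

variable {n : ℕ}

lemma pd_eq_of_hasFDerivAt {φ : (Fin n → ℝ) → ℝ} {φ' : (Fin n → ℝ) →L[ℝ] ℝ}
    {x : Fin n → ℝ} (hφ : HasFDerivAt φ φ' x) (i : Fin n) :
    pd i φ x = φ' (Pi.single i 1) := by
  rw [pd, hφ.fderiv]

lemma hasFDerivAt_sum_apply (x : Fin n → ℝ) :
    HasFDerivAt (fun x : Fin n → ℝ => ∑ k, x k)
      (∑ k, ContinuousLinearMap.proj (R := ℝ) k) x :=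
  HasFDerivAt.fun_sum fun k _ => hasFDerivAt_apply (𝕜 := ℝ) k x

lemma pd_comp_sum {g : ℝ → ℝ} (hg : Differentiable ℝ g) (i : Fin n) :
    pd i (fun x => g (∑ k, x k)) = fun x => deriv g (∑ k, x k) := by
  funext x
  rw [pd_eq_of_hasFDerivAt (φ := fun x => g (∑ k, x k))
    ((hg _).hasDerivAt.comp_hasFDerivAt x (hasFDerivAt_sum_apply x))]
  simp [Pi.single_apply]

lemma pd_affine (i j : Fin n) (α β γ : ℝ) (x : Fin n → ℝ) :
    pd j (fun x => α * x i + β * ∑ k, x k + γ) x = α * (if i = j then 1 else 0) + β := by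
  have h := (((hasFDerivAt_apply (𝕜 := ℝ) i x).const_mul α).fun_add
    ((hasFDerivAt_sum_apply x).const_mul β)).add_const γ
  rw [pd_eq_of_hasFDerivAt h]
  simp [Pi.single_apply, eq_comm]

lemma pd_quadratic (A B b : ℝ) (c : Fin n → ℝ) (i : Fin n) :
    pd i (fun x => A * ∑ k, x k ^ 2 + B * (∑ k, x k) ^ 2 + ∑ k, c k * x k + b)
      = fun x => 2 * A * x i + 2 * B * ∑ k, x k + c i := by
  funext x
  have hsq := HasFDerivAt.fun_sum (u := Finset.univ) fun k _ =>
    (hasFDerivAt_apply (𝕜 := ℝ) k x).pow 2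
  have hlin := HasFDerivAt.fun_sum (u := Finset.univ) fun k _ =>
    (hasFDerivAt_apply (𝕜 := ℝ) k x).const_mul (c k)
  have h := (((hsq.const_mul A).fun_add (((hasFDerivAt_sum_apply x).pow 2).const_mul B)).fun_add
    hlin).add_const b
  rw [pd_eq_of_hasFDerivAt h]
  simp [Pi.single_apply]
  ring

lemma pd_pd_quadratic (A B b : ℝ) (c : Fin n → ℝ) (i j : Fin n) (x : Fin n → ℝ) :
    pd j (pd i (fun x => A * ∑ k, x k ^ 2 + B * (∑ k, x k) ^ 2 + ∑ k, c k * x k + b)) x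
      = 2 * A * (if i = j then 1 else 0) + 2 * B := by
  rw [pd_quadratic, pd_affine]

lemma sum_pd_quadratic (A B b : ℝ) (c : Fin n → ℝ) (x : Fin n → ℝ) :
    ∑ i, pd i (fun x => A * ∑ k, x k ^ 2 + B * (∑ k, x k) ^ 2 + ∑ k, c k * x k + b) x
      = 2 * (A + n * B) * ∑ k, x k + ∑ k, c k := by
  simp only [pd_quadratic, Finset.sum_add_distrib, ← Finset.mul_sum, Finset.sum_const,
    Finset.card_univ, Fintype.card_fin, nsmul_eq_mul]
  ring

end Calculus

lemma two_mul_sum_sum_ite_lt {ι R : Type*} [Fintype ι] [LinearOrder ι] [CommRing R]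
    (x : ι → R) :
    2 * ∑ k, ∑ l, (if k < l then x k * x l else 0) = (∑ k, x k) ^ 2 - ∑ k, x k ^ 2 := by
  have hsplit : ∀ k l, x k * x l = (if k < l then x k * x l else 0)
      + (if l < k then x l * x k else 0) + (if k = l then x k * x l else 0) := by
    intro k l
    rcases lt_trichotomy k l with hkl | rfl | hkl
    · simp [hkl, hkl.not_gt, hkl.ne]
    · simp
    · simp [hkl, hkl.not_gt, hkl.ne', mul_comm]
  have hdiag : ∑ k, ∑ l, (if k = l then x k * x l else 0) = ∑ k, x k ^ 2 := by
    simp [sq]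
  rw [sq, Finset.sum_mul_sum,
    Finset.sum_congr rfl fun k _ => Finset.sum_congr rfl fun l _ => hsplit k l]
  simp only [Finset.sum_add_distrib]
  rw [Finset.sum_comm (f := fun k l => if l < k then x l * x k else 0), hdiag]
  ring

noncomputable def expPair (α β s t : ℝ) : ℝ := α * exp (s * t) + β * exp (-(s * t))

lemma hasDerivAt_expPair (α β s t : ℝ) :
    HasDerivAt (expPair α β s) (expPair (s * α) (-(s * β)) s t) t := by
  have hlin := (hasDerivAt_id' t).const_mul s
  have h : HasDerivAt (fun t => α * exp (s * t) + β * exp (-(s * t)))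
      (α * (exp (s * t) * (s * 1)) + β * (exp (-(s * t)) * -(s * 1))) t :=
    (hlin.exp.const_mul α).add (hlin.neg.exp.const_mul β)
  refine h.congr_deriv ?_
  simp only [expPair]
  ring

lemma deriv_expPair (α β s : ℝ) : deriv (expPair α β s) = expPair (s * α) (-(s * β)) s :=
  funext fun t => (hasDerivAt_expPair α β s t).deriv

lemma differentiable_expPair (α β s : ℝ) : Differentiable ℝ (expPair α β s) :=
  fun t => (hasDerivAt_expPair α β s t).differentiableAt

-- `cosh² - sinh² = 1` in disguise.
lemma expPair_deriv_sq (α β s t : ℝ) :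
    expPair (s * α) (-(s * β)) s t ^ 2 = s ^ 2 * (expPair α β s t ^ 2 - 4 * α * β) := by
  have h : exp (s * t) * exp (-(s * t)) = 1 := by rw [← exp_add, add_neg_cancel, exp_zero]
  simp only [expPair]
  linear_combination (-4 * s ^ 2 * α * β) * h

lemma pd_expPair_comp_sum {n : ℕ} (α β s : ℝ) (i : Fin n) :
    pd i (fun x => expPair α β s (∑ k, x k))
      = fun x => expPair (s * α) (-(s * β)) s (∑ k, x k) := by
  rw [pd_comp_sum (differentiable_expPair α β s), deriv_expPair]

lemma pd_pd_expPair_comp_sum {n : ℕ} (α β s : ℝ) (i j : Fin n) (x : Fin n → ℝ) :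
    pd j (pd i (fun x => expPair α β s (∑ k, x k))) x = s ^ 2 * expPair α β s (∑ k, x k) := by
  rw [pd_expPair_comp_sum, pd_expPair_comp_sum]
  simp only [expPair]
  ring

theorem stmt4_general {n m : ℕ} (hm : 1 ≤ m)
    (a a₁ a₂ b : ℝ) (ha : 0 < a)
    (c : Fin n → ℝ) (hc : ∑ k, c k = 0)
    (ρ lamF : ℝ) (hρ : ρ = -(n * a))
    (hlam : lamF = 4 * a₁ * a₂ * ρ * (m - 1) / m)
    (f h : (Fin n → ℝ) → ℝ)
    (hfdef : f = fun x => a₁ * Real.exp (Real.sqrt (a / m) * ∑ k, x k)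
      + a₂ * Real.exp (-(Real.sqrt (a / m) * ∑ k, x k)))
    (hhdef : h = fun x => -((n - 1) * a / 2) * ∑ k, (x k) ^ 2
      + a * ∑ k, ∑ l, (if k < l then x k * x l else 0)
      + ∑ k, c k * x k + b) :
    (∀ i j : Fin n, i ≠ j → ∀ x,
      f x * pd j (pd i h) x = (m : ℝ) * pd j (pd i f) x) ∧
    (∀ i : Fin n, ∀ x,
      f x * pd i (pd i h) x - (m : ℝ) * pd i (pd i f) x = ρ * f x) ∧
    (∀ x, ∑ k, (-(f x * pd k (pd k f) x) - ((m : ℝ) - 1) * (pd k f x) ^ 2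
      + f x * pd k f x * pd k h x) = ρ * f x ^ 2 - lamF) := by
  set s := √(a / m)
  have hm0 : (m : ℝ) ≠ 0 := Nat.cast_ne_zero.mpr (by omega)
  have hs : (m : ℝ) * s ^ 2 = a := by
    rw [sq_sqrt (by positivity)]
    field_simp
  have hf : f = fun x => expPair a₁ a₂ s (∑ k, x k) := hfdef
  have hh : h = fun x => -(n * a / 2) * ∑ k, x k ^ 2 + a / 2 * (∑ k, x k) ^ 2
      + ∑ k, c k * x k + b := by
    funext x
    rw [hhdef]
    linear_combination (a / 2) * two_mul_sum_sum_ite_lt x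
  have hf_grad : ∀ i x, pd i f x = expPair (s * a₁) (-(s * a₂)) s (∑ k, x k) := fun i x => by
    rw [hf, pd_expPair_comp_sum]
  have hf_hess : ∀ i j x, pd j (pd i f) x = s ^ 2 * f x := fun i j x => by
    rw [hf, pd_pd_expPair_comp_sum]
  have hh_hess : ∀ i j x, pd j (pd i h) x = -(n * a) * (if i = j then 1 else 0) + a :=
    fun i j x => by
      rw [hh, pd_pd_quadratic]
      ring
  have hh_grad_sum : ∀ x, ∑ k, pd k h x = 0 := fun x => by
    rw [hh, sum_pd_quadratic, hc]
    ring
  subst hρ hlam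
  refine ⟨fun i j hij x => ?_, fun i x => ?_, fun x => ?_⟩
  · rw [hf_hess, hh_hess, if_neg hij]
    linear_combination (-f x) * hs
  · rw [hf_hess, hh_hess, if_pos rfl]
    linear_combination (-f x) * hs
  · simp only [hf_hess, hf_grad, Finset.sum_add_distrib, ← Finset.mul_sum, hh_grad_sum,
      Finset.sum_const, Finset.card_univ, Fintype.card_fin, nsmul_eq_mul, expPair_deriv_sq]
    rw [hf, ← hs]
    field_simp
    ring

theorem stmt4 {n m : ℕ} (hn : 2 ≤ n) (hm : 1 ≤ m)
    (a a₁ a₂ b : ℝ) (ha : 0 < a) (ha12 : a₁ ^ 2 + a₂ ^ 2 ≠ 0)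
    (c : Fin n → ℝ) (hc : ∑ k, c k = 0)
    (ρ lamF : ℝ) (hρ : ρ = -(n * a))
    (hlam : lamF = 4 * a₁ * a₂ * ρ * (m - 1) / m)
    (f h : (Fin n → ℝ) → ℝ)
    (hfdef : f = fun x => a₁ * Real.exp (Real.sqrt (a / m) * ∑ k, x k)
      + a₂ * Real.exp (-(Real.sqrt (a / m) * ∑ k, x k)))
    (hhdef : h = fun x => -((n - 1) * a / 2) * ∑ k, (x k) ^ 2
      + a * ∑ k, ∑ l, (if k < l then x k * x l else 0)
      + ∑ k, c k * x k + b) :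
    (∀ i j : Fin n, i ≠ j → ∀ x,
      f x * pd j (pd i h) x = (m : ℝ) * pd j (pd i f) x) ∧
    (∀ i : Fin n, ∀ x,
      f x * pd i (pd i h) x - (m : ℝ) * pd i (pd i f) x = ρ * f x) ∧
    (∀ x, ∑ k, (-(f x * pd k (pd k f) x) - ((m : ℝ) - 1) * (pd k f x) ^ 2
      + f x * pd k f x * pd k h x) = ρ * f x ^ 2 - lamF) :=
  stmt4_general hm a a₁ a₂ b ha c hc ρ lamF hρ hlam f h hfdef hhdef
end

section
/- Let f : ℝ → ℝ be smooth and positive, h : ℝⁿ → ℝ smooth, m ≥ 1, ρ ∈ ℝ, λ_F ∈ ℝ. Suppose F(x) := f(x₁) and h satisfy: ∂²h/∂xᵢ∂xⱼ = (m/F)·∂²F/∂xᵢ∂xⱼ for all i ≠ j, and F·∂²h/∂xᵢ² − m·∂²F/∂xᵢ² = ρF for all i. Then there exist a smooth function h₁ : ℝ → ℝ and constants aₖ, bₖ ∈ ℝ such that h(x₁,…,xₙ) = h₁(x₁) + Σ_{k=2}ⁿ ((ρ/2)xₖ² + aₖxₖ + bₖ), and h₁ satisfies f·h₁'' − m·f''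 = ρ·f. -/
namespace Stmt7Aux

variable {n : ℕ}

lemma pd_eq {i : Fin n} {f : (Fin n → ℝ) → ℝ} {x} {L : (Fin n → ℝ) →L[ℝ] ℝ}
    (h : HasFDerivAt f L x) : pd i f x = L (Pi.single i 1) := by
  rw [pd, h.fderiv]

lemma pd_contDiff (i : Fin n) {f : (Fin n → ℝ) → ℝ} (hf : ContDiff ℝ (⊤ : ℕ∞) f) :
    ContDiff ℝ (⊤ : ℕ∞) (pd i f) := by
  unfold pd
  exact (ContinuousLinearMap.apply ℝ ℝ (Pi.single i 1)).contDiff.comp (hf.fderiv_right (m := ((⊤ : ℕ∞) : WithTop ℕ∞)) (by simp))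

lemma clm_apply_eq_zero (L : (Fin n → ℝ) →L[ℝ] ℝ) (h : ∀ i, L (Pi.single i 1) = 0)
    (v : Fin n → ℝ) : L v = 0 := by
  have hv : v = ∑ i, v i • (Pi.single i 1 : Fin n → ℝ) := by
    rw [← Finset.univ_sum_single v]
    congr 1
    funext i j
    by_cases hj : j = i <;> simp [Pi.single_apply, hj]
  rw [hv, map_sum]
  simp [h]

lemma clm_eq_zero (L : (Fin n → ℝ) →L[ℝ] ℝ) (h : ∀ i, L (Pi.single i 1) = 0) : L = 0 := by
  ext1 v
  exact clm_apply_eq_zero L h v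

noncomputable def prj (n : ℕ) (k : Fin n) : (Fin n → ℝ) →L[ℝ] ℝ :=
  ContinuousLinearMap.proj k

lemma prj_hasFDerivAt (k : Fin n) (x : Fin n → ℝ) :
    HasFDerivAt (fun x : Fin n → ℝ => x k) (prj n k) x := by
  exact ContinuousLinearMap.hasFDerivAt (prj n k)

@[simp] lemma prj_apply (k : Fin n) (v : Fin n → ℝ) : prj n k v = v k := rfl

/-- single-coordinate constancy -/
lemma update_const {g : (Fin n → ℝ) → ℝ} (hg : ContDiff ℝ (⊤ : ℕ∞) g) (k : Fin n)
    (hk : ∀ x, pd k g x = 0) (x : Fin n → ℝ) : g x = g (Function.update x k 0) := by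
  have key : ∀ t : ℝ, HasDerivAt
      (fun s : ℝ => g (Function.update x k 0 + s • (Pi.single k 1 : Fin n → ℝ))) 0 t := by
    intro t
    have h1 : HasDerivAt (fun s : ℝ =>
        Function.update x k 0 + s • (Pi.single k 1 : Fin n → ℝ)) (Pi.single k 1) t := by
      simpa using ((hasDerivAt_id t).smul_const (Pi.single k 1 : Fin n → ℝ)).const_add
        (Function.update x k 0)
    have h2 : HasFDerivAt g
        (fderiv ℝ g (Function.update x k 0 + t • (Pi.single k 1 : Fin n → ℝ)))
        (Function.update x k 0 + t • (Pi.single k 1 : Fin n → ℝ)) :=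
      (hg.differentiable (by simp) _).hasFDerivAt
    have h3 := h2.comp_hasDerivAt t h1
    have hz := hk (Function.update x k 0 + t • (Pi.single k 1 : Fin n → ℝ))
    simp only [pd] at hz
    rw [hz] at h3
    simpa [Function.comp_def] using h3
  have hconst := is_const_of_deriv_eq_zero (f := fun s : ℝ =>
      g (Function.update x k 0 + s • (Pi.single k 1 : Fin n → ℝ)))
      (fun s => (key s).differentiableAt) (fun s => (key s).deriv) (x k) 0
  simp only [zero_smul, add_zero] at hconst
  have hx : Function.update x k 0 + (x k) • (Pi.single k 1 : Fin n → ℝ) = x := by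
    funext j
    by_cases hj : j = k
    · subst hj; simp
    · simp [Function.update_of_ne hj, Pi.single_eq_of_ne hj]
  rw [hx] at hconst
  exact hconst

lemma depends_only (i0 : Fin n) {g : (Fin n → ℝ) → ℝ} (hg : ContDiff ℝ (⊤ : ℕ∞) g)
    (h0 : ∀ k : Fin n, k ≠ i0 → ∀ x, pd k g x = 0) (x : Fin n → ℝ) :
    g x = g (Pi.single i0 (x i0)) := by
  have main : ∀ s : Finset (Fin n), i0 ∉ s →
      g x = g (fun j => if j ∈ s then 0 else x j) := by
    intro s
    induction s using Finset.induction_on with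
    | empty => intro _; simp
    | @insert a s ha ih =>
      intro hins
      have hi0s : i0 ∉ s := fun hs => hins (Finset.mem_insert_of_mem hs)
      have hai0 : a ≠ i0 := fun hai => hins (hai ▸ Finset.mem_insert_self a s)
      have step := update_const hg a (h0 a hai0) (fun j => if j ∈ s then 0 else x j)
      have heq : Function.update (fun j => if j ∈ s then 0 else x j) a 0
          = (fun j => if j ∈ insert a s then 0 else x j) := by
        funext j
        by_cases hj : j = a
        · subst hj; simp
        · simp [Function.update_of_ne hj, Finset.mem_insert, hj]
      rw [ih hi0s, step, heq]
  have hmain := main (Finset.univ.filter (· ≠ i0)) (by simp)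
  rw [hmain]
  congr 1
  funext j
  by_cases hj : j = i0
  · subst hj; simp
  · simp [hj, Pi.single_eq_of_ne hj]

end Stmt7Aux
theorem stmt7 {n m : ℕ} (hn : 2 ≤ n) (hm : 1 ≤ m) (i0 : Fin n) (hi0 : (i0 : ℕ) = 0) (ρ lamF : ℝ)
    (f : ℝ → ℝ) (hf : ContDiff ℝ (⊤ : ℕ∞) f) (hfpos : ∀ t, 0 < f t)
    (h : (Fin n → ℝ) → ℝ) (hh : ContDiff ℝ (⊤ : ℕ∞) h)
    (F : (Fin n → ℝ) → ℝ) (hFdef : F = fun x => f (x i0))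
    (heq1 : ∀ i j : Fin n, i ≠ j → ∀ x,
      pd j (pd i h) x = ((m : ℝ) / F x) * pd j (pd i F) x)
    (heq2 : ∀ i : Fin n, ∀ x,
      F x * pd i (pd i h) x - (m : ℝ) * pd i (pd i F) x = ρ * F x) :
    ∃ (h₁ : ℝ → ℝ) (A B : Fin n → ℝ), ContDiff ℝ (⊤ : ℕ∞) h₁ ∧
      (∀ x, h x = h₁ (x i0) + ∑ k ∈ Finset.univ.filter (· ≠ i0),
        (ρ / 2 * (x k) ^ 2 + A k * x k + B k)) ∧
      (∀ t, f t * deriv (deriv h₁) t - (m : ℝ) * deriv (deriv f) t = ρ * f t) := by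
  classical
  subst hFdef
  have hfd : Differentiable ℝ f := hf.differentiable (by simp)
  have hf' : ContDiff ℝ (⊤ : ℕ∞) (deriv f) := by
    have hde : deriv f = fun x => fderiv ℝ f x 1 := rfl
    rw [hde]
    exact (ContinuousLinearMap.apply ℝ ℝ (1 : ℝ)).contDiff.comp (hf.fderiv_right (by simp))
  have hf'd : Differentiable ℝ (deriv f) := hf'.differentiable (by simp)
  -- partial derivatives of functions of the form x ↦ u (x i0)
  have comp_fd : ∀ (u : ℝ → ℝ), Differentiable ℝ u → ∀ x : Fin n → ℝ,
      HasFDerivAt (fun x : Fin n → ℝ => u (x i0)) ((deriv u (x i0)) • Stmt7Aux.prj n i0) x := by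
    intro u hu x
    exact ((hu (x i0)).hasDerivAt).comp_hasFDerivAt x (Stmt7Aux.prj_hasFDerivAt i0 x)
  have pd_comp : ∀ (u : ℝ → ℝ), Differentiable ℝ u → ∀ (j : Fin n) (x : Fin n → ℝ),
      pd j (fun x : Fin n → ℝ => u (x i0)) x = deriv u (x i0) * ((Pi.single j 1 : Fin n → ℝ) i0) := by
    intro u hu j x
    rw [Stmt7Aux.pd_eq (comp_fd u hu x)]
    simp [Stmt7Aux.prj]
  have pdF_ne : ∀ i : Fin n, i ≠ i0 →
      (pd i (fun x : Fin n → ℝ => f (x i0))) = fun _ => (0 : ℝ) := by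
    intro i hi
    funext x
    rw [pd_comp f hfd i x, Pi.single_eq_of_ne (Ne.symm hi), mul_zero]
  have pdF_i0 : pd i0 (fun x : Fin n → ℝ => f (x i0))
      = fun x : Fin n → ℝ => deriv f (x i0) := by
    funext x
    rw [pd_comp f hfd i0 x, Pi.single_eq_same, mul_one]
  have pd_zero : ∀ (j : Fin n) (x : Fin n → ℝ), pd j (fun _ : Fin n → ℝ => (0 : ℝ)) x = 0 := by
    intro j x
    rw [Stmt7Aux.pd_eq (hasFDerivAt_const 0 x)]
    simp
  have pdpdF_mixed : ∀ i j : Fin n, i ≠ j → ∀ x,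
      pd j (pd i (fun x : Fin n → ℝ => f (x i0))) x = 0 := by
    intro i j hij x
    by_cases hi : i = i0
    · subst hi
      rw [pdF_i0, pd_comp (deriv f) hf'd j x, Pi.single_eq_of_ne hij, mul_zero]
    · rw [pdF_ne i hi]
      exact pd_zero j x
  have pdpdF_diag_ne : ∀ i : Fin n, i ≠ i0 → ∀ x,
      pd i (pd i (fun x : Fin n → ℝ => f (x i0))) x = 0 := by
    intro i hi x
    rw [pdF_ne i hi]
    exact pd_zero i x
  have pdpdF_i0 : ∀ x : Fin n → ℝ,
      pd i0 (pd i0 (fun x : Fin n → ℝ => f (x i0))) x = deriv (deriv f) (x i0) := by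
    intro x
    rw [pdF_i0, pd_comp (deriv f) hf'd i0 x, Pi.single_eq_same, mul_one]
  have hmix : ∀ i j : Fin n, i ≠ j → ∀ x, pd j (pd i h) x = 0 := by
    intro i j hij x
    rw [heq1 i j hij x, pdpdF_mixed i j hij x, mul_zero]
  have hdiag : ∀ i : Fin n, i ≠ i0 → ∀ x, pd i (pd i h) x = ρ := by
    intro i hi x
    have h2 := heq2 i x
    rw [pdpdF_diag_ne i hi x, mul_zero, sub_zero] at h2
    simp only at h2
    exact mul_left_cancel₀ (ne_of_gt (hfpos (x i0))) (by linear_combination h2)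
  have hdiag0 : ∀ x : Fin n → ℝ,
      f (x i0) * pd i0 (pd i0 h) x - (m : ℝ) * deriv (deriv f) (x i0) = ρ * f (x i0) := by
    intro x
    have h2 := heq2 i0 x
    rw [pdpdF_i0 x] at h2
    simpa using h2
  set S : Finset (Fin n) := Finset.univ.filter (· ≠ i0) with hS
  set A : Fin n → ℝ := fun k => pd k h 0 with hA
  set P : (Fin n → ℝ) → ℝ := fun x => ∑ k ∈ S, (ρ / 2 * (x k) ^ 2 + A k * x k) with hP
  have hP_fd : ∀ x : Fin n → ℝ, HasFDerivAt P (∑ k ∈ S, (ρ * x k + A k) • Stmt7Aux.prj n k) x := by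
    intro x
    apply HasFDerivAt.fun_sum
    intro k _
    have hu : HasDerivAt (fun t : ℝ => ρ / 2 * t ^ 2 + A k * t) (ρ * x k + A k) (x k) := by
      have := ((hasDerivAt_pow 2 (x k)).const_mul (ρ / 2)).fun_add
        ((hasDerivAt_id (x k)).const_mul (A k))
      refine this.congr_deriv ?_
      push_cast
      ring
    exact hu.comp_hasFDerivAt x (Stmt7Aux.prj_hasFDerivAt k x)
  have hpdP : ∀ (j : Fin n) (x : Fin n → ℝ),
      pd j P x = if j ∈ S then ρ * x j + A j else 0 := by
    intro j x
    rw [Stmt7Aux.pd_eq (hP_fd x), ContinuousLinearMap.sum_apply]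
    simp only [ContinuousLinearMap.smul_apply, Stmt7Aux.prj, ContinuousLinearMap.proj_apply,
      smul_eq_mul, Pi.single_apply, mul_ite, mul_one, mul_zero]
    exact Finset.sum_ite_eq' S j (fun k => ρ * x k + A k)
  have hxk : ∀ k : Fin n, ContDiff ℝ (⊤ : ℕ∞) (fun x : Fin n → ℝ => x k) :=
    fun k => (ContinuousLinearMap.proj (R := ℝ) (φ := fun _ : Fin n => ℝ) k).contDiff
  have hPc : ContDiff ℝ (⊤ : ℕ∞) P := by
    apply ContDiff.sum
    intro k _
    exact (contDiff_const.mul ((hxk k).pow 2)).add (contDiff_const.mul (hxk k))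
  set g : (Fin n → ℝ) → ℝ := fun x => h x - P x with hg
  have hgc : ContDiff ℝ (⊤ : ℕ∞) g := hh.sub hPc
  have hpdg : ∀ (j : Fin n) (x : Fin n → ℝ), pd j g x = pd j h x - pd j P x := by
    intro j x
    have h1 : HasFDerivAt g (fderiv ℝ h x - fderiv ℝ P x) x :=
      ((hh.differentiable (by simp) x).hasFDerivAt).sub ((hPc.differentiable (by simp) x).hasFDerivAt)
    rw [Stmt7Aux.pd_eq h1]
    simp [pd]
  have hpdg0 : ∀ k : Fin n, k ≠ i0 → ∀ x, pd k g x = 0 := by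
    intro k hk x
    set ψ : (Fin n → ℝ) → ℝ := fun y => pd k h y - (ρ * y k + A k) with hψ
    have hψc : ContDiff ℝ (⊤ : ℕ∞) ψ :=
      (Stmt7Aux.pd_contDiff k hh).sub ((contDiff_const.mul (hxk k)).add contDiff_const)
    have hψfd : ∀ y, HasFDerivAt ψ (fderiv ℝ (pd k h) y - ρ • Stmt7Aux.prj n k) y := by
      intro y
      refine (((Stmt7Aux.pd_contDiff k hh).differentiable (by simp) y).hasFDerivAt).sub ?_
      exact ((ρ • Stmt7Aux.prj n k).hasFDerivAt).add_const (A k)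
    have hval : ∀ y, fderiv ℝ (pd k h) y - ρ • Stmt7Aux.prj n k = 0 := by
      intro y
      apply Stmt7Aux.clm_eq_zero
      intro j
      have e1 : fderiv ℝ (pd k h) y (Pi.single j 1) = pd j (pd k h) y := rfl
      simp only [ContinuousLinearMap.sub_apply, ContinuousLinearMap.smul_apply, Stmt7Aux.prj,
        ContinuousLinearMap.proj_apply, smul_eq_mul, e1]
      by_cases hj : j = k
      · subst hj
        rw [hdiag j hk y, Pi.single_eq_same, mul_one, sub_self]
      · rw [hmix k j (fun hkj => hj hkj.symm) y, Pi.single_eq_of_ne (Ne.symm hj), mul_zero,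
          sub_zero]
    have hψ0 : ψ x = ψ 0 :=
      is_const_of_fderiv_eq_zero (hψc.differentiable (by simp))
        (fun y => by rw [(hψfd y).fderiv]; exact hval y) x 0
    have hz : ψ 0 = 0 := by simp [hψ, hA]
    have hkS : k ∈ S := by simp [hS, hk]
    rw [hpdg k x, hpdP k x, if_pos hkS]
    rw [hψ] at hψ0
    simpa [hz, hA] using hψ0
  have hpdg_i0 : ∀ x, pd i0 g x = pd i0 h x := by
    intro x
    rw [hpdg i0 x, hpdP i0 x, if_neg (by simp [hS]), sub_zero]
  have hdep : ∀ x, g x = g (Pi.single i0 (x i0)) :=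
    Stmt7Aux.depends_only i0 hgc hpdg0
  -- the one-variable function
  set h₁ : ℝ → ℝ := fun t => g (Pi.single i0 t) with hh₁
  have hsingle_eq : (fun t : ℝ => (Pi.single i0 t : Fin n → ℝ))
      = fun t : ℝ => t • (Pi.single i0 1 : Fin n → ℝ) := by
    funext t j
    by_cases hj : j = i0 <;> simp [Pi.single_apply, hj]
  have hsingc : ContDiff ℝ (⊤ : ℕ∞) (fun t : ℝ => (Pi.single i0 t : Fin n → ℝ)) := by
    rw [hsingle_eq]
    exact contDiff_id.smul contDiff_const
  have hh₁c : ContDiff ℝ (⊤ : ℕ∞) h₁ := hgc.comp hsingc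
  have hder : ∀ (u : (Fin n → ℝ) → ℝ), ContDiff ℝ (⊤ : ℕ∞) u → ∀ t : ℝ,
      HasDerivAt (fun s : ℝ => u (Pi.single i0 s)) (pd i0 u (Pi.single i0 t)) t := by
    intro u hu t
    have h1 : HasDerivAt (fun s : ℝ => (Pi.single i0 s : Fin n → ℝ)) (Pi.single i0 1) t := by
      rw [hsingle_eq]
      simpa using (hasDerivAt_id t).smul_const (Pi.single i0 1 : Fin n → ℝ)
    have h2 := ((hu.differentiable (by simp) (Pi.single i0 t)).hasFDerivAt).comp_hasDerivAt t h1
    simpa [Function.comp_def, pd] using h2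
  have hderiv1 : deriv h₁ = fun t => pd i0 g (Pi.single i0 t) :=
    funext fun t => (hder g hgc t).deriv
  have hpdgg : pd i0 g = pd i0 h := funext hpdg_i0
  have hderiv2 : ∀ t, deriv (deriv h₁) t = pd i0 (pd i0 h) (Pi.single i0 t) := by
    intro t
    rw [hderiv1, ← hpdgg]
    exact (hder (pd i0 g) (Stmt7Aux.pd_contDiff i0 hgc) t).deriv
  refine ⟨h₁, A, fun _ => 0, hh₁c, ?_, ?_⟩
  · intro x
    have hhx : h x = g x + P x := by rw [hg]; ring
    rw [hhx, hdep x]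
    simp only [hP, add_zero]
    rfl
  · intro t
    have := hdiag0 (Pi.single i0 t)
    rw [Pi.single_eq_same] at this
    rw [hderiv2 t]
    exact this
end
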